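/- Little-o behavior of the smoothed error majorant: Let φ̂ : [0,∞)² → [0,∞) be continuous, nondecreasing in each variable, with φ̂(0,0) = 0 and φ̂(u₁,u₂) → 0 as (u₁,u₂) → (0,0). Define Υ(u₁,u₂) := ∫_{u₁}^{2u₁} φ̂(ξ, u₂) dξ + (2/3) ∫_{u₂}^{2u₂} ∫_{η}^{2η} φ̂(u₁, ξ) dξ dη and set ρ(h₁,h₂) := Υ(|h₁|, |h₂|) for (h₁,h₂) ∈ ℝ². Then ρ is continuous, ρ(0,0) = 0, and ρ(h₁,h₂)/(|h₁| + |h₂|²) → 0 as (h₁,h₂) → (0,0). Moreover, if a function ϱ : ℝ² → ℝ satisfies ϱ(h₁,h₂) ≤ (|h₁| + |h₂|²) φ̂(|h₁|,|h₂|) for all (h₁,h₂), then ϱ ≤ ρ. -/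

import Mathlib

open Set Filter Topology Asymptotics intervalIntegral

set_option maxHeartbeats 1000000

noncomputable section

/-- `Υ(u₁,u₂) = ∫_{u₁}^{2u₁} φ̂(ξ,u₂) dξ + (2/3) ∫_{u₂}^{2u₂} ∫_{η}^{2η} φ̂(u₁,ξ) dξ dη`. -/
def Upsilon (φh : ℝ × ℝ → ℝ) (u : ℝ × ℝ) : ℝ :=
  (∫ ξ in u.1..(2 * u.1), φh (ξ, u.2)) +
    (2 / 3) * ∫ η in u.2..(2 * u.2), ∫ ξ in η..(2 * η), φh (u.1, ξ)

lemma param_cont (F : (ℝ × ℝ) → ℝ → ℝ) (hF : Continuous (Function.uncurry F))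
    (s r : ℝ × ℝ → ℝ) (hs : Continuous s) (hr : Continuous r) :
    Continuous (fun u : ℝ × ℝ => ∫ t in s u..r u, F u t) := by
  have h1 : Continuous fun u : ℝ × ℝ => ∫ t in (0:ℝ)..r u, F u t :=
    intervalIntegral.continuous_parametric_intervalIntegral_of_continuous hF hr
  have h2 : Continuous fun u : ℝ × ℝ => ∫ t in (0:ℝ)..s u, F u t :=
    intervalIntegral.continuous_parametric_intervalIntegral_of_continuous hF hs
  have heq : (fun u : ℝ × ℝ => ∫ t in s u..r u, F u t)
      = fun u => (∫ t in (0:ℝ)..r u, F u t) - ∫ t in (0:ℝ)..s u, F u t := by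
    funext u
    rw [intervalIntegral.integral_interval_sub_left
      ((hF.uncurry_left u).intervalIntegrable _ _) ((hF.uncurry_left u).intervalIntegrable _ _)]
  rw [heq]
  exact h1.sub h2

lemma upsilon_cont (ψ : ℝ × ℝ → ℝ) (hψ : Continuous ψ) : Continuous (Upsilon ψ) := by
  have h1 : Continuous (fun u : ℝ × ℝ => ∫ ξ in u.1..(2*u.1), ψ (ξ, u.2)) :=
    param_cont (fun u t => ψ (t, u.2))
      (hψ.comp (continuous_snd.prodMk (continuous_fst.snd)))
      _ _ continuous_fst (continuous_const.mul continuous_fst)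
  have hg : Continuous (fun q : ℝ × ℝ => ∫ ξ in q.2..(2*q.2), ψ (q.1, ξ)) :=
    param_cont (fun q t => ψ (q.1, t))
      (hψ.comp ((continuous_fst.fst).prodMk continuous_snd))
      _ _ continuous_snd (continuous_const.mul continuous_snd)
  have hGu : Continuous (Function.uncurry (fun (u : ℝ × ℝ) (η : ℝ) =>
      ∫ ξ in η..(2*η), ψ (u.1, ξ))) := by
    have h : (Function.uncurry (fun (u : ℝ × ℝ) (η : ℝ) => ∫ ξ in η..(2*η), ψ (u.1, ξ)))
        = (fun q : ℝ × ℝ => ∫ ξ in q.2..(2*q.2), ψ (q.1, ξ)) ∘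
          (fun p : (ℝ × ℝ) × ℝ => (p.1.1, p.2)) := by
      funext p
      rfl
    rw [h]
    exact hg.comp ((continuous_fst.fst).prodMk continuous_snd)
  have h2 : Continuous (fun u : ℝ × ℝ => ∫ η in u.2..(2*u.2), ∫ ξ in η..(2*η), ψ (u.1, ξ)) :=
    param_cont (fun u η => ∫ ξ in η..(2*η), ψ (u.1, ξ)) hGu
      _ _ continuous_snd (continuous_const.mul continuous_snd)
  exact h1.add (continuous_const.mul h2)

/-- **Little-o behavior of the smoothed error majorant**: with
`ρ(h₁,h₂) := Υ(|h₁|,|h₂|)`, the function `ρ` is continuous, vanishes at the origin,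
satisfies `ρ(h) = o(|h₁| + |h₂|²)` as `h → 0`, and dominates any function `ϱ` with
`ϱ(h) ≤ (|h₁| + |h₂|²) φ̂(|h₁|,|h₂|)`. -/
theorem upsilon_little_o
    (φh : ℝ × ℝ → ℝ)
    (hcont : ContinuousOn φh (Ici 0 ×ˢ Ici 0))
    (hnonneg : ∀ u ∈ Ici (0 : ℝ) ×ˢ Ici (0 : ℝ), 0 ≤ φh u)
    (hmono1 : ∀ u₂ ∈ Ici (0 : ℝ), ∀ u₁ u₁' : ℝ, 0 ≤ u₁ → u₁ ≤ u₁' →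
      φh (u₁, u₂) ≤ φh (u₁', u₂))
    (hmono2 : ∀ u₁ ∈ Ici (0 : ℝ), ∀ u₂ u₂' : ℝ, 0 ≤ u₂ → u₂ ≤ u₂' →
      φh (u₁, u₂) ≤ φh (u₁, u₂'))
    (h00 : φh (0, 0) = 0)
    (hlim : Tendsto φh (𝓝[Ici (0 : ℝ) ×ˢ Ici (0 : ℝ)] (0, 0)) (𝓝 0)) :
    Continuous (fun h : ℝ × ℝ => Upsilon φh (|h.1|, |h.2|)) ∧
    Upsilon φh (|(0 : ℝ)|, |(0 : ℝ)|) = 0 ∧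
    ((fun h : ℝ × ℝ => Upsilon φh (|h.1|, |h.2|)) =o[𝓝 (0 : ℝ × ℝ)]
      fun h : ℝ × ℝ => |h.1| + |h.2| ^ 2) ∧
    (∀ ϱ : ℝ × ℝ → ℝ,
      (∀ h : ℝ × ℝ, ϱ h ≤ (|h.1| + |h.2| ^ 2) * φh (|h.1|, |h.2|)) →
      ∀ h : ℝ × ℝ, ϱ h ≤ Upsilon φh (|h.1|, |h.2|)) := by
  -- continuous extension of `φh` to the whole plane
  obtain ⟨ψ, hψdef⟩ : ∃ ψ : ℝ × ℝ → ℝ, ψ = fun p => φh (max p.1 0, max p.2 0) := ⟨_, rfl⟩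
  have hmemS : ∀ p : ℝ × ℝ, ((max p.1 0, max p.2 0) : ℝ × ℝ) ∈ Ici (0:ℝ) ×ˢ Ici (0:ℝ) :=
    fun p => ⟨mem_Ici.mpr (le_max_right _ _), mem_Ici.mpr (le_max_right _ _)⟩
  have hψc : Continuous ψ := by
    rw [hψdef]
    exact hcont.comp_continuous
      (((continuous_fst.max continuous_const)).prodMk
       ((continuous_snd.max continuous_const))) hmemS
  have hψeq : ∀ p : ℝ × ℝ, p ∈ Ici (0:ℝ) ×ˢ Ici (0:ℝ) → ψ p = φh p := by
    rintro ⟨x, y⟩ ⟨hx, hy⟩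
    rw [hψdef]
    simp only [max_eq_left (mem_Ici.mp hx : (0:ℝ) ≤ x), max_eq_left (mem_Ici.mp hy : (0:ℝ) ≤ y)]
  have hψnn : ∀ p : ℝ × ℝ, 0 ≤ ψ p := by
    intro p; rw [hψdef]; exact hnonneg _ (hmemS p)
  have hψm1 : ∀ x x' y : ℝ, x ≤ x' → ψ (x, y) ≤ ψ (x', y) := by
    intro x x' y h; rw [hψdef]
    exact hmono1 (max y 0) (mem_Ici.mpr (le_max_right _ _)) _ _ (le_max_right _ _) (max_le_max h le_rfl)
  have hψm2 : ∀ x y y' : ℝ, y ≤ y' → ψ (x, y) ≤ ψ (x, y') := by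
    intro x y y' h; rw [hψdef]
    exact hmono2 (max x 0) (mem_Ici.mpr (le_max_right _ _)) _ _ (le_max_right _ _) (max_le_max h le_rfl)
  -- `Upsilon ψ` agrees with `Upsilon φh` on the quadrant
  have hUeq : ∀ u₁ u₂ : ℝ, 0 ≤ u₁ → 0 ≤ u₂ →
      Upsilon φh (u₁, u₂) = Upsilon ψ (u₁, u₂) := by
    intro u₁ u₂ h1 h2
    unfold Upsilon
    congr 1
    · apply intervalIntegral.integral_congr
      intro ξ hξ
      rw [uIcc_of_le (by linarith)] at hξ
      exact (hψeq (ξ, u₂) ⟨le_trans h1 hξ.1, h2⟩).symm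
    · congr 1
      apply intervalIntegral.integral_congr
      intro η hη
      rw [uIcc_of_le (by linarith)] at hη
      have hη0 : 0 ≤ η := le_trans h2 hη.1
      apply intervalIntegral.integral_congr
      intro ξ hξ
      rw [uIcc_of_le (by linarith)] at hξ
      exact (hψeq (u₁, ξ) ⟨h1, le_trans hη0 hξ.1⟩).symm
  -- the key two-sided bounds
  have key : ∀ u₁ u₂ : ℝ, 0 ≤ u₁ → 0 ≤ u₂ →
      (u₁ + u₂ ^ 2) * ψ (u₁, u₂) ≤ Upsilon ψ (u₁, u₂) ∧
      Upsilon ψ (u₁, u₂) ≤ (u₁ + u₂ ^ 2) * ψ (2 * u₁, 4 * u₂) := by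
    intro u₁ u₂ h1 h2
    have hc1 : Continuous fun ξ : ℝ => ψ (ξ, u₂) :=
      hψc.comp (continuous_id.prodMk continuous_const)
    have hc2 : ∀ x : ℝ, Continuous fun ξ : ℝ => ψ (x, ξ) := fun x =>
      hψc.comp (continuous_const.prodMk continuous_id)
    have hgc : Continuous (fun η : ℝ => ∫ ξ in η..(2*η), ψ (u₁, ξ)) := by
      have hG : Continuous (fun q : ℝ × ℝ => ∫ ξ in q.2..(2*q.2), ψ (q.1, ξ)) :=
        param_cont (fun q t => ψ (q.1, t))
          (hψc.comp ((continuous_fst.fst).prodMk continuous_snd))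
          _ _ continuous_snd (continuous_const.mul continuous_snd)
      have h : (fun η : ℝ => ∫ ξ in η..(2*η), ψ (u₁, ξ))
          = (fun q : ℝ × ℝ => ∫ ξ in q.2..(2*q.2), ψ (q.1, ξ)) ∘ (fun η : ℝ => (u₁, η)) := by
        funext η
        rfl
      rw [h]
      exact hG.comp (continuous_const.prodMk continuous_id)
    -- bounds on first integral
    have hL1 : u₁ * ψ (u₁, u₂) ≤ ∫ ξ in u₁..(2*u₁), ψ (ξ, u₂) := by
      calc u₁ * ψ (u₁, u₂) = ∫ _ in u₁..(2*u₁), ψ (u₁, u₂) := by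
            rw [intervalIntegral.integral_const, smul_eq_mul]; ring
        _ ≤ ∫ ξ in u₁..(2*u₁), ψ (ξ, u₂) := by
            apply intervalIntegral.integral_mono_on (by linarith)
              intervalIntegrable_const (hc1.intervalIntegrable _ _)
            intro ξ hξ
            exact hψm1 _ _ _ hξ.1
    have hU1 : (∫ ξ in u₁..(2*u₁), ψ (ξ, u₂)) ≤ u₁ * ψ (2 * u₁, 4 * u₂) := by
      calc (∫ ξ in u₁..(2*u₁), ψ (ξ, u₂)) ≤ ∫ _ in u₁..(2*u₁), ψ (2*u₁, 4*u₂) := by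
            apply intervalIntegral.integral_mono_on (by linarith)
              (hc1.intervalIntegrable _ _) intervalIntegrable_const
            intro ξ hξ
            exact le_trans (hψm1 _ _ _ hξ.2) (hψm2 _ _ _ (by linarith))
        _ = u₁ * ψ (2 * u₁, 4 * u₂) := by
            rw [intervalIntegral.integral_const, smul_eq_mul]; ring
    -- bounds on the double integral
    have hL2 : (3/2) * u₂ ^ 2 * ψ (u₁, u₂)
        ≤ ∫ η in u₂..(2*u₂), ∫ ξ in η..(2*η), ψ (u₁, ξ) := by
      calc (3/2) * u₂ ^ 2 * ψ (u₁, u₂) = ∫ η in u₂..(2*u₂), η * ψ (u₁, u₂) := by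
            rw [intervalIntegral.integral_mul_const, integral_id]; ring
        _ ≤ ∫ η in u₂..(2*u₂), ∫ ξ in η..(2*η), ψ (u₁, ξ) := by
            apply intervalIntegral.integral_mono_on (by linarith)
              ((continuous_id.mul continuous_const).intervalIntegrable _ _)
              (hgc.intervalIntegrable _ _)
            intro η hη
            have hη0 : 0 ≤ η := le_trans h2 hη.1
            calc η * ψ (u₁, u₂) = ∫ _ in η..(2*η), ψ (u₁, u₂) := by
                  rw [intervalIntegral.integral_const, smul_eq_mul]; ring
              _ ≤ ∫ ξ in η..(2*η), ψ (u₁, ξ) := by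
                  apply intervalIntegral.integral_mono_on (by linarith)
                    intervalIntegrable_const ((hc2 u₁).intervalIntegrable _ _)
                  intro ξ hξ
                  exact hψm2 _ _ _ (le_trans hη.1 hξ.1)
    have hU2 : (∫ η in u₂..(2*u₂), ∫ ξ in η..(2*η), ψ (u₁, ξ))
        ≤ (3/2) * u₂ ^ 2 * ψ (2 * u₁, 4 * u₂) := by
      calc (∫ η in u₂..(2*u₂), ∫ ξ in η..(2*η), ψ (u₁, ξ))
          ≤ ∫ η in u₂..(2*u₂), η * ψ (2*u₁, 4*u₂) := by
            apply intervalIntegral.integral_mono_on (by linarith)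
              (hgc.intervalIntegrable _ _)
              ((continuous_id.mul continuous_const).intervalIntegrable _ _)
            intro η hη
            have hη0 : 0 ≤ η := le_trans h2 hη.1
            calc (∫ ξ in η..(2*η), ψ (u₁, ξ)) ≤ ∫ _ in η..(2*η), ψ (2*u₁, 4*u₂) := by
                  apply intervalIntegral.integral_mono_on (by linarith)
                    ((hc2 u₁).intervalIntegrable _ _) intervalIntegrable_const
                  intro ξ hξ
                  exact le_trans (hψm1 _ _ _ (by linarith))
                    (hψm2 _ _ _ (by nlinarith [hξ.2, hη.2]))
              _ = η * ψ (2*u₁, 4*u₂) := by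
                  rw [intervalIntegral.integral_const, smul_eq_mul]; ring
        _ = (3/2) * u₂ ^ 2 * ψ (2 * u₁, 4 * u₂) := by
            rw [intervalIntegral.integral_mul_const, integral_id]; ring
    constructor
    · unfold Upsilon
      simp only
      nlinarith [hL1, hL2]
    · unfold Upsilon
      simp only
      nlinarith [hU1, hU2]
  refine ⟨?_, ?_, ?_, ?_⟩
  · -- continuity
    have heq : (fun h : ℝ × ℝ => Upsilon φh (|h.1|, |h.2|))
        = fun h : ℝ × ℝ => Upsilon ψ (|h.1|, |h.2|) :=
      funext fun h => hUeq _ _ (abs_nonneg _) (abs_nonneg _)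
    rw [heq]
    exact (upsilon_cont ψ hψc).comp
      ((continuous_fst.abs).prodMk (continuous_snd.abs))
  · -- value at the origin
    simp [Upsilon, intervalIntegral.integral_same]
  · -- little-o
    rw [isLittleO_iff]
    intro c hc
    have hmap : Tendsto (fun h : ℝ × ℝ => ((2 * |h.1|, 4 * |h.2|) : ℝ × ℝ)) (𝓝 0)
        (𝓝[Ici (0:ℝ) ×ˢ Ici (0:ℝ)] (0, 0)) := by
      rw [tendsto_nhdsWithin_iff]
      constructor
      · have hco : Continuous fun h : ℝ × ℝ => ((2 * |h.1|, 4 * |h.2|) : ℝ × ℝ) :=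
          ((continuous_const.mul continuous_fst.abs).prodMk
            (continuous_const.mul continuous_snd.abs))
        have := hco.tendsto 0
        simpa using this
      · filter_upwards with h
        simp only [Set.mem_prod, Set.mem_Ici]
        constructor <;> positivity
    have htend : Tendsto (fun h : ℝ × ℝ => φh (2 * |h.1|, 4 * |h.2|)) (𝓝 0) (𝓝 0) :=
      hlim.comp hmap
    filter_upwards [htend (Iio_mem_nhds hc)] with h hh
    replace hh : φh (2 * |h.1|, 4 * |h.2|) < c := hh
    have h1 : (0:ℝ) ≤ |h.1| := abs_nonneg _
    have h2 : (0:ℝ) ≤ |h.2| := abs_nonneg _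
    have hkey := key |h.1| |h.2| h1 h2
    have hmem : ((2 * |h.1|, 4 * |h.2|) : ℝ × ℝ) ∈ Ici (0:ℝ) ×ˢ Ici (0:ℝ) :=
      ⟨mem_Ici.mpr (mul_nonneg (by norm_num) (abs_nonneg _)), mem_Ici.mpr (mul_nonneg (by norm_num) (abs_nonneg _))⟩
    have hψφ : ψ (2 * |h.1|, 4 * |h.2|) = φh (2 * |h.1|, 4 * |h.2|) := hψeq _ hmem
    have hUnn : 0 ≤ Upsilon ψ (|h.1|, |h.2|) :=
      le_trans (mul_nonneg (by positivity) (hψnn _)) hkey.1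
    rw [hUeq _ _ h1 h2]
    rw [Real.norm_eq_abs, Real.norm_eq_abs, abs_of_nonneg hUnn,
      abs_of_nonneg (by positivity : (0:ℝ) ≤ |h.1| + |h.2| ^ 2)]
    have hup := hkey.2
    rw [hψφ] at hup
    nlinarith [abs_nonneg h.1, sq_nonneg h.2, hh, hup, hnonneg _ hmem]
  · -- domination
    intro ϱ hϱ h
    have h1 : (0:ℝ) ≤ |h.1| := abs_nonneg _
    have h2 : (0:ℝ) ≤ |h.2| := abs_nonneg _
    have hψφ : ψ (|h.1|, |h.2|) = φh (|h.1|, |h.2|) := hψeq _ ⟨h1, h2⟩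
    have := (key |h.1| |h.2| h1 h2).1
    rw [hψφ] at this
    rw [hUeq _ _ h1 h2]
    exact le_trans (hϱ h) this
end
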